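/- Let ρ ∈ ℰ₊, let (ρ_p)_{p≥1} be the nonincreasing sequence of nonzero eigenvalues of ρ counted with multiplicity, and let (λ_p[H])_{p≥1} be the nondecreasing sequence of eigenvalues of H counted with multiplicity. Then Tr(√H ρ √H) ≥ Σ_{p≥1} ρ_p λ_p[H]. -/

import Mathlib

/- Common setting (De Nitti–Méhats–Pinaud style quantum entropy minimization on the torus).

We model `L²(0,1)` with periodic boundary conditions as `L²` of the circle `ℝ/ℤ` with its
normalized Haar (Lebesgue) measure.  The free Hamiltonian `H = -d²/dx²` (periodic b.c.) is
diagonal in the Fourier basis `e_j(x) = exp(2iπjx)` with eigenvalues `μ_j = (2πj)²`; all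
trace-type quantities are expressed spectrally through this basis:
* `Tr T = Σ_j ⟨e_j, T e_j⟩`,
* `Tr(√H T √H) = Σ_j μ_j ⟨e_j, T e_j⟩` (since each `e_j` is an eigenvector of `√H`),
* `‖T‖²_{𝒥₂} = Σ_j ‖T e_j‖²`, and `‖√H T‖²_{𝒥₂} = Σ_j μ_j ‖T e_j‖²` for self-adjoint `T`,
* membership in `H¹_per`, the pairing with `H⁻¹_per` etc. are expressed via Fourier
  coefficients (`‖u'‖² = Σ_j μ_j |û_j|²`). -/

open MeasureTheory Real Filter

set_option synthInstance.maxHeartbeats 1000000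
set_option maxHeartbeats 1000000

noncomputable section

namespace QSM

local instance factOnePos : Fact ((0:ℝ) < 1) := ⟨one_pos⟩

/-- The one-dimensional torus `ℝ/ℤ`, modelling `[0,1]` with periodic boundary conditions. -/
abbrev Torus : Type := AddCircle (1:ℝ)

/-- The normalized Haar (= Lebesgue) measure on the torus. -/
abbrev μT : Measure Torus := @AddCircle.haarAddCircle 1 factOnePos

/-- The Hilbert space `L²(0,1)` (with periodic identification). -/
abbrev L2 : Type := Lp ℂ 2 μT

local instance instNUCFCL2 : NonUnitalContinuousFunctionalCalculus ℝ (L2 →L[ℂ] L2) IsSelfAdjoint :=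
  IsSelfAdjoint.instNonUnitalContinuousFunctionalCalculus

local instance instCFCL2 : ContinuousFunctionalCalculus ℝ (L2 →L[ℂ] L2) IsSelfAdjoint :=
  IsSelfAdjoint.instContinuousFunctionalCalculus

/-- The `j`-th Fourier exponential `x ↦ exp(2iπjx)` as an element of `L²`; these form a
Hilbert basis of eigenvectors of `H = -d²/dx²` with periodic boundary conditions. -/
def fE (j : ℤ) : L2 := fourierBasis j

/-- The eigenvalue `(2πj)²` of `H = -d²/dx²` on the Fourier mode `fE j`. -/
def muH (j : ℤ) : ℝ := (2 * π * j) ^ 2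

/-- The absolute value `|T| = √(T⋆T)` of an operator. -/
def absOp (T : L2 →L[ℂ] L2) : L2 →L[ℂ] L2 := CFC.sqrt (star T * T)

/-- The square root `√ρ` of a nonnegative operator. -/
def sqrtOp (ρ : L2 →L[ℂ] L2) : L2 →L[ℂ] L2 := CFC.sqrt ρ

/-- Diagonal trace sum `Σ_j Re⟨e_j, T e_j⟩` (the trace of `T`, when `T` is trace class). -/
def trD (T : L2 →L[ℂ] L2) : ℝ := ∑' j : ℤ, (inner ℂ (fE j) (T (fE j)) : ℂ).re

/-- The trace norm `Tr|T| = ‖T‖_{𝒥₁}`. -/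
def trNorm (T : L2 →L[ℂ] L2) : ℝ := trD (absOp T)

/-- `T` is trace class (`T ∈ 𝒥₁`). -/
def MemJ1 (T : L2 →L[ℂ] L2) : Prop :=
  Summable fun j : ℤ => (inner ℂ (fE j) (absOp T (fE j)) : ℂ).re

/-- Hilbert–Schmidt norm squared `‖T‖²_{𝒥₂} = Σ_j ‖T e_j‖²`. -/
def hsNormSq (T : L2 →L[ℂ] L2) : ℝ := ∑' j : ℤ, ‖T (fE j)‖ ^ 2

/-- `Tr(√H |T| √H) = Σ_j μ_j ⟨e_j, |T| e_j⟩`. -/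
def kinAbs (T : L2 →L[ℂ] L2) : ℝ :=
  ∑' j : ℤ, muH j * (inner ℂ (fE j) (absOp T (fE j)) : ℂ).re

/-- The kinetic energy `Tr(√H ρ √H) = Σ_j μ_j ⟨e_j, ρ e_j⟩`. -/
def kinE (ρ : L2 →L[ℂ] L2) : ℝ := ∑' j : ℤ, muH j * (inner ℂ (fE j) (ρ (fE j)) : ℂ).re

/-- `‖√H T‖²_{𝒥₂} = Σ_j μ_j ‖T e_j‖²` (valid for self-adjoint `T`). -/
def kinHSNormSq (T : L2 →L[ℂ] L2) : ℝ := ∑' j : ℤ, muH j * ‖T (fE j)‖ ^ 2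

/-- The energy space `ℰ`: self-adjoint trace-class `ρ` with `√H|ρ|√H` trace class. -/
def MemE (ρ : L2 →L[ℂ] L2) : Prop :=
  IsSelfAdjoint ρ ∧ MemJ1 ρ ∧
    Summable fun j : ℤ => muH j * (inner ℂ (fE j) (absOp ρ (fE j)) : ℂ).re

/-- The cone `ℰ₊` of nonnegative elements of the energy space. -/
def MemEplus (ρ : L2 →L[ℂ] L2) : Prop := MemE ρ ∧ 0 ≤ ρ

/-- The regularised entropy function `β_η(s) = (s+η)log(s+η) − s − η log η`;
for `η = 0` this is `β(s) = s log s − s` (with the convention `0 log 0 = 0`). -/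
def betaEnt (η : ℝ) (s : ℝ) : ℝ := (s + η) * Real.log (s + η) - s - η * Real.log η

/-- The von Neumann entropy `Tr(ρ log ρ − ρ)` (via the functional calculus). -/
def entropy (ρ : L2 →L[ℂ] L2) : ℝ := trD (cfc (fun s : ℝ => s * Real.log s - s) ρ)

/-- The free energy `F(ρ) = Tr(ρ log ρ − ρ) + Tr(√H ρ √H)`. -/
def freeEnergy (ρ : L2 →L[ℂ] L2) : ℝ := entropy ρ + kinE ρ

/-- The trace `Tr(Φρ) = Σ_j ⟨e_j, Φ·(ρ e_j)⟩` of `ρ` against a multiplication operator `Φ`. -/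
def traceAgainst (ρ : L2 →L[ℂ] L2) (Φ : Torus → ℂ) : ℂ :=
  ∑' j : ℤ, ∫ x, (starRingEnd ℂ) ((fE j : Torus → ℂ) x) * Φ x * ((ρ (fE j) : Torus → ℂ) x) ∂μT

/-- `n` is the local density `n[ρ]` of `ρ`: it is integrable and `Tr(Φρ) = ∫ Φ n`
for every bounded measurable `Φ` (acting by multiplication). -/
def IsDensity (ρ : L2 →L[ℂ] L2) (n : Torus → ℝ) : Prop :=
  Integrable n μT ∧
    ∀ Φ : Torus → ℂ, Measurable Φ → (∃ C, ∀ x, ‖Φ x‖ ≤ C) →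
      traceAgainst ρ Φ = ∫ x, Φ x * (n x : ℂ) ∂μT

/-- `H¹_per`-membership of a function, via its Fourier coefficients. -/
def MemH1Fun (u : Torus → ℂ) : Prop :=
  Integrable u μT ∧ Summable fun j : ℤ => (1 + muH j) * ‖fourierCoeff u j‖ ^ 2

/-- `H¹_per`-membership of an `L²` element, via its Fourier coefficients. -/
def MemH1 (u : L2) : Prop :=
  Summable fun j : ℤ => (1 + muH j) * ‖fourierBasis.repr u j‖ ^ 2

/-- The Dirichlet (kinetic) sesquilinear form `(√H u, √H v) = (u', v')`. -/
def QH (u v : L2) : ℂ :=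
  ∑' j : ℤ, (muH j : ℂ) * (starRingEnd ℂ) (fourierBasis.repr u j) * fourierBasis.repr v j

/-- Membership in `H⁻¹_per = (H¹_per)'` of the distribution `A = Σ_j a_j e_j` given by its
Fourier coefficients `a`. -/
def MemHm1 (a : ℤ → ℂ) : Prop := Summable fun j : ℤ => ‖a j‖ ^ 2 / (1 + muH j)

/-- The duality pairing `⟨A, v⟩_{H⁻¹_per, H¹_per} = Σ_j a_j v̂_{-j}` ("`∫ A v`"). -/
def pairHm1 (a : ℤ → ℂ) (v : Torus → ℂ) : ℂ := ∑' j : ℤ, a j * fourierCoeff v (-j)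

/-- The sesquilinear form `Q_A(u,v) = (u',v') + ⟨A, ū v⟩` for `A ∈ H⁻¹_per` (Fourier data `a`);
its diagonal is `Q_A(φ,φ) = ‖φ'‖² + ⟨A, |φ|²⟩`. -/
def QA (a : ℤ → ℂ) (u v : L2) : ℂ :=
  QH u v + pairHm1 a fun x => (starRingEnd ℂ) ((u : Torus → ℂ) x) * ((v : Torus → ℂ) x)

/-- The sesquilinear form `Q_A(u,v) = (u',v') + ∫ A ū v` for a potential `A ∈ L^∞`. -/
def QAfun (A : Torus → ℝ) (u v : L2) : ℂ :=
  QH u v + ∫ x, (A x : ℂ) * (starRingEnd ℂ) ((u : Torus → ℂ) x) * ((v : Torus → ℂ) x) ∂μT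

/-- `ρ = exp(−(H+A))` where `A ∈ H⁻¹_per`, given by its Fourier coefficients `a`, and `H+A`
is the self-adjoint operator (with compact resolvent) associated with the form `Q_A`:
there is a complete orthonormal system `(φ_p) ⊂ H¹_per` and reals `(μ_p)` such that the `φ_p`
are exactly the form-eigenvectors of `Q_A` with eigenvalues `μ_p`, and `ρ φ_p = exp(−μ_p) φ_p`. -/
def IsExpNegHA (a : ℤ → ℂ) (ρ : L2 →L[ℂ] L2) : Prop :=
  ∃ (φ : ℕ → L2) (μ : ℕ → ℝ),
    Orthonormal ℂ φ ∧ (Submodule.span ℂ (Set.range φ)).topologicalClosure = ⊤ ∧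
    ∀ p, MemH1 (φ p) ∧ ρ (φ p) = (Real.exp (-μ p) : ℂ) • φ p ∧
      ∀ ψ : L2, MemH1 ψ → QA a (φ p) ψ = (μ p : ℂ) * (inner ℂ (φ p) ψ : ℂ)

/-- `ρ = exp(−(H+A))` for a (bounded) real potential `A`, in the quadratic-form sense. -/
def IsExpNegHAfun (A : Torus → ℝ) (ρ : L2 →L[ℂ] L2) : Prop :=
  ∃ (φ : ℕ → L2) (μ : ℕ → ℝ),
    Orthonormal ℂ φ ∧ (Submodule.span ℂ (Set.range φ)).topologicalClosure = ⊤ ∧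
    ∀ p, MemH1 (φ p) ∧ ρ (φ p) = (Real.exp (-μ p) : ℂ) • φ p ∧
      ∀ ψ : L2, MemH1 ψ → QAfun A (φ p) ψ = (μ p : ℂ) * (inner ℂ (φ p) ψ : ℂ)

/-- A complete orthonormal eigenbasis of `ρ` with nonincreasing nonnegative eigenvalues
(the nonzero eigenvalues in nonincreasing order, counted with multiplicity, padded by `0`s). -/
def IsEigenbasis (ρ : L2 →L[ℂ] L2) (φ : ℕ → L2) (lam : ℕ → ℝ) : Prop :=
  Orthonormal ℂ φ ∧ (Submodule.span ℂ (Set.range φ)).topologicalClosure = ⊤ ∧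
    Antitone lam ∧ (∀ p, 0 ≤ lam p) ∧ ∀ p, ρ (φ p) = (lam p : ℂ) • φ p

/-- The hypothesis «`n ∈ H¹_per` and `n > 0` on `[0,1]`», stated for the continuous
representative of `n`. -/
def GoodDensity (n : Torus → ℝ) : Prop :=
  Continuous n ∧ (∀ x, 0 < n x) ∧
    Summable fun j : ℤ => (1 + muH j) * ‖fourierCoeff (fun x => (n x : ℂ)) j‖ ^ 2

/-- The penalized free energy `F_ε(ρ) = F(ρ) + (1/(2ε)) ‖n[ρ] − n‖²_{L²}`,
where `nρ = n[ρ]` is the density of `ρ`. -/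
def Feps (ε : ℝ) (n : Torus → ℝ) (ρ : L2 →L[ℂ] L2) (nρ : Torus → ℝ) : ℝ :=
  freeEnergy ρ + (1 / (2 * ε)) * ∫ x, (nρ x - n x) ^ 2 ∂μT

end QSM
namespace QSM

/-- The `p`-th eigenvalue of `H = -d²/dx²` (periodic b.c.) in nondecreasing order with
multiplicity: `0, (2π)², (2π)², (4π)², (4π)², …` (indexing from `p = 0`). -/
noncomputable def lamH (p : ℕ) : ℝ := (2 * Real.pi * (((p + 1) / 2 : ℕ) : ℝ)) ^ 2

end QSM

/-! Expanding `ρ` in its eigenbasis `(φ_p)` and `H` in the Fourier basis `(e_j)` gives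
`Tr(√H ρ √H) = ∑_p ρ_p ∑_j μ_j w_pj` with `w_pj = |⟨φ_p, e_j⟩|²`, a doubly stochastic matrix.
For each `n`, the column weights `T_j = ∑_{p<n} w_pj` lie in `[0, 1]` and add up to `n`, so
`∑_j μ_j T_j` is at least the sum of the `n` smallest eigenvalues of `H` (Ky Fan's principle).
As `(ρ_p)` is nonincreasing, Abel summation turns these inequalities between partial sums into
the weighted inequality. All series are handled in `ℝ≥0∞`, where they may be freely rearranged. -/

open Finset
open scoped ENNReal InnerProductSpace

section HilbertBasis

variable {ι κ 𝕜 E : Type*} [RCLike 𝕜] [NormedAddCommGroup E] [InnerProductSpace 𝕜 E]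

theorem HilbertBasis.hasSum_norm_inner_sq (b : HilbertBasis ι 𝕜 E) (x : E) :
    HasSum (fun i => ‖⟪b i, x⟫_𝕜‖ ^ 2) (‖x‖ ^ 2) := by
  simpa [b.repr_apply_apply] using lp.hasSum_norm (p := 2) (by norm_num) (b.repr x)

theorem HilbertBasis.tsum_ofReal_norm_inner_sq (b : HilbertBasis ι 𝕜 E) (x : E) :
    ∑' i, ENNReal.ofReal (‖⟪b i, x⟫_𝕜‖ ^ 2) = ENNReal.ofReal (‖x‖ ^ 2) := by
  rw [← (b.hasSum_norm_inner_sq x).tsum_eq,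
    ENNReal.ofReal_tsum_of_nonneg (fun _ => by positivity) (b.hasSum_norm_inner_sq x).summable]

theorem HilbertBasis.tsum_ofReal_norm_inner_sq_left (b : HilbertBasis ι 𝕜 E)
    (c : HilbertBasis κ 𝕜 E) (j : κ) : ∑' i, ENNReal.ofReal (‖⟪b i, c j⟫_𝕜‖ ^ 2) = 1 := by
  rw [b.tsum_ofReal_norm_inner_sq, c.orthonormal.1 j, one_pow, ENNReal.ofReal_one]

theorem HilbertBasis.tsum_ofReal_norm_inner_sq_right (b : HilbertBasis ι 𝕜 E)
    (c : HilbertBasis κ 𝕜 E) (i : ι) : ∑' j, ENNReal.ofReal (‖⟪b i, c j⟫_𝕜‖ ^ 2) = 1 := by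
  simp_rw [norm_inner_symm (b i)]
  exact c.tsum_ofReal_norm_inner_sq_left b i

variable [CompleteSpace E]

theorem HilbertBasis.hasSum_re_inner_apply_self (b : HilbertBasis ι 𝕜 E) {T : E →L[𝕜] E}
    (hT : IsSelfAdjoint T) {lam : ι → ℝ} (hb : ∀ i, T (b i) = (lam i : 𝕜) • b i) (x : E) :
    HasSum (fun i => lam i * ‖⟪b i, x⟫_𝕜‖ ^ 2) (RCLike.re ⟪x, T x⟫_𝕜) := by
  have hterm : ∀ i, ⟪x, b i⟫_𝕜 * ⟪b i, T x⟫_𝕜 = ((lam i * ‖⟪b i, x⟫_𝕜‖ ^ 2 : ℝ) : 𝕜) := by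
    intro i
    have hsymm : ⟪T (b i), x⟫_𝕜 = ⟪b i, T x⟫_𝕜 := hT.isSymmetric (b i) x
    rw [← hsymm, hb, inner_smul_left, RCLike.conj_ofReal, ← inner_conj_symm,
      mul_left_comm, RCLike.conj_mul]
    push_cast; ring
  simpa [hterm] using RCLike.hasSum_re 𝕜 (b.hasSum_inner_mul_inner x (T x))

theorem HilbertBasis.tsum_ofReal_mul_re_inner_apply_self (b : HilbertBasis ι 𝕜 E)
    {T : E →L[𝕜] E} (hT : IsSelfAdjoint T) {lam : ι → ℝ} (hlam : ∀ i, 0 ≤ lam i)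
    (hb : ∀ i, T (b i) = (lam i : 𝕜) • b i) {μ : κ → ℝ} (hμ : ∀ j, 0 ≤ μ j) (f : κ → E) :
    ∑' j, ENNReal.ofReal (μ j * RCLike.re ⟪f j, T (f j)⟫_𝕜)
      = ∑' i, ENNReal.ofReal (lam i) *
          ∑' j, ENNReal.ofReal (μ j) * ENNReal.ofReal (‖⟪b i, f j⟫_𝕜‖ ^ 2) := by
  have hexpand : ∀ j, ENNReal.ofReal (RCLike.re ⟪f j, T (f j)⟫_𝕜)
      = ∑' i, ENNReal.ofReal (lam i) * ENNReal.ofReal (‖⟪b i, f j⟫_𝕜‖ ^ 2) := fun j => by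
    have h := b.hasSum_re_inner_apply_self hT hb (f j)
    rw [← h.tsum_eq, ENNReal.ofReal_tsum_of_nonneg (fun i => by have := hlam i; positivity)
      h.summable]
    exact tsum_congr fun i => ENNReal.ofReal_mul (hlam i)
  simp_rw [ENNReal.ofReal_mul (hμ _), hexpand, ← ENNReal.tsum_mul_left]
  rw [ENNReal.tsum_comm]
  exact tsum_congr fun i => tsum_congr fun j => by ring

end HilbertBasis

theorem summable_and_tsum_le_of_tsum_ofReal_le {ι : Type*} {f : ι → ℝ} (hf : ∀ i, 0 ≤ f i)
    {c : ℝ} (hc : 0 ≤ c) (h : ∑' i, ENNReal.ofReal (f i) ≤ ENNReal.ofReal c) :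
    Summable f ∧ ∑' i, f i ≤ c := by
  have hs : Summable f := by
    simpa [ENNReal.toReal_ofReal (hf _)] using
      ENNReal.summable_toReal (ne_top_of_le_ne_top ENNReal.ofReal_ne_top h)
  refine ⟨hs, ?_⟩
  rwa [← ENNReal.ofReal_tsum_of_nonneg hf hs, ENNReal.ofReal_le_ofReal_iff hc] at h

namespace ENNReal

theorem sum_range_le_tsum_mul_of_monotone {Λ T : ℕ → ℝ≥0∞} (hΛ : Monotone Λ)
    (hT : ∀ p, T p ≤ 1) {n : ℕ} (hn : ∑' p, T p = n) :
    ∑ p ∈ range n, Λ p ≤ ∑' p, Λ p * T p := by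
  -- The mass `∑_{p<n} (1 - T p)` missing from the first `n` slots sits in the tail,
  -- where `Λ ≥ Λ n`.
  have hhead : ∑ p ∈ range n, T p ≠ ∞ :=
    sum_ne_top.2 fun p _ => ne_top_of_le_ne_top one_ne_top (hT p)
  have htail : ∑ p ∈ range n, (1 - T p) = ∑' i, T (i + n) := by
    refine (ENNReal.add_left_inj hhead).1 ?_
    rw [← sum_add_distrib, add_comm (∑' i, T (i + n)), ENNReal.summable.sum_add_tsum_nat_add', hn]
    simp [tsub_add_cancel_of_le (hT _)]
  calc ∑ p ∈ range n, Λ p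
      = ∑ p ∈ range n, Λ p * T p + ∑ p ∈ range n, Λ p * (1 - T p) := by
        rw [← sum_add_distrib]
        refine sum_congr rfl fun p _ => ?_
        rw [← mul_add, add_tsub_cancel_of_le (hT p), mul_one]
    _ ≤ ∑ p ∈ range n, Λ p * T p + Λ n * ∑ p ∈ range n, (1 - T p) := by
        rw [mul_sum]
        gcongr with p hp
        exact hΛ (mem_range.1 hp).le
    _ ≤ ∑ p ∈ range n, Λ p * T p + ∑' i, Λ (i + n) * T (i + n) := by
        rw [htail, ← ENNReal.tsum_mul_left]
        gcongr with i
        exact hΛ (Nat.le_add_left n i)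
    _ = ∑' p, Λ p * T p := ENNReal.summable.sum_add_tsum_nat_add'

theorem sum_range_mul_le_of_antitone {a x y : ℕ → ℝ≥0∞} (ha : Antitone a) {n : ℕ}
    (h : ∀ m ≤ n, ∑ p ∈ range m, y p ≤ ∑ p ∈ range m, x p) :
    ∑ p ∈ range n, a p * y p ≤ ∑ p ∈ range n, a p * x p := by
  induction n generalizing a with
  | zero => simp
  | succ n ih =>
    -- Split `a p = (a p - a n) + a n`; the first part is again antitone and vanishes at `n`.
    have hsplit : ∀ z : ℕ → ℝ≥0∞, ∑ p ∈ range (n + 1), a p * z p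
        = ∑ p ∈ range n, (a p - a n) * z p + a n * ∑ p ∈ range (n + 1), z p := by
      intro z
      rw [sum_range_succ, sum_range_succ, mul_add, ← add_assoc, mul_sum, ← sum_add_distrib]
      congr 1
      refine sum_congr rfl fun p hp => ?_
      rw [← add_mul, tsub_add_cancel_of_le (ha (mem_range.1 hp).le)]
    rw [hsplit, hsplit]
    gcongr ?_ + a n * ?_
    · exact ih (fun p q hpq => tsub_le_tsub_right (ha hpq) _) fun m hm => h m (by omega)
    · exact h (n + 1) le_rfl

theorem tsum_mul_le_of_antitone {a x y : ℕ → ℝ≥0∞} (ha : Antitone a)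
    (h : ∀ n, ∑ p ∈ range n, y p ≤ ∑ p ∈ range n, x p) :
    ∑' p, a p * y p ≤ ∑' p, a p * x p := by
  simp only [ENNReal.tsum_eq_iSup_nat]
  exact iSup_mono fun n => sum_range_mul_le_of_antitone ha fun m _ => h m

theorem sum_range_le_sum_range_tsum_mul {ι : Type*} (e : ℕ ≃ ι) {M : ι → ℝ≥0∞}
    (hM : Monotone (M ∘ e)) {w : ℕ → ι → ℝ≥0∞} (hcol : ∀ j, ∑' p, w p j ≤ 1)
    (hrow : ∀ p, ∑' j, w p j = 1) (n : ℕ) :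
    ∑ p ∈ range n, M (e p) ≤ ∑ p ∈ range n, ∑' j, M j * w p j := by
  have hT : ∀ k, ∑ p ∈ range n, w p (e k) ≤ 1 :=
    fun k => (ENNReal.sum_le_tsum _).trans (hcol _)
  have hn : ∑' k, ∑ p ∈ range n, w p (e k) = n := by
    rw [Summable.tsum_finsetSum fun _ _ => ENNReal.summable]
    simp [e.tsum_eq (w _), hrow]
  calc ∑ p ∈ range n, M (e p)
      ≤ ∑' k, M (e k) * ∑ p ∈ range n, w p (e k) := sum_range_le_tsum_mul_of_monotone hM hT hn
    _ = ∑ p ∈ range n, ∑' j, M j * w p j := by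
      simp_rw [mul_sum]
      rw [Summable.tsum_finsetSum fun _ _ => ENNReal.summable]
      exact sum_congr rfl fun p _ => e.tsum_eq fun j => M j * w p j

theorem tsum_mul_le_tsum_mul_tsum_mul_of_substochastic {ι : Type*} {a : ℕ → ℝ≥0∞}
    (ha : Antitone a) (e : ℕ ≃ ι) {M : ι → ℝ≥0∞} (hM : Monotone (M ∘ e))
    {w : ℕ → ι → ℝ≥0∞} (hcol : ∀ j, ∑' p, w p j ≤ 1) (hrow : ∀ p, ∑' j, w p j = 1) :
    ∑' p, a p * M (e p) ≤ ∑' p, a p * ∑' j, M j * w p j :=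
  tsum_mul_le_of_antitone ha (sum_range_le_sum_range_tsum_mul e hM hcol hrow)

end ENNReal

/-- `Equiv.intEquivNat` sends `m` to `2m` and `-(m+1)` to `2m+1`, so its inverse enumerates `ℤ`
as `0, -1, 1, -2, 2, …`, by nondecreasing absolute value. -/
theorem Equiv.natAbs_intEquivNat_symm (p : ℕ) :
    (Equiv.intEquivNat.symm p).natAbs = (p + 1) / 2 := by
  obtain ⟨j, rfl⟩ := Equiv.intEquivNat.surjective p
  rw [Equiv.symm_apply_apply]
  rcases j with m | m
  · change (Int.ofNat m).natAbs = (2 * m + 1) / 2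
    rw [Int.ofNat_eq_natCast, Int.natAbs_natCast]
    omega
  · change (Int.negSucc m).natAbs = (2 * m + 1 + 1) / 2
    rw [Int.natAbs_negSucc]
    omega

namespace QSM

attribute [local instance] instNUCFCL2

theorem muH_intEquivNat_symm (p : ℕ) : muH (Equiv.intEquivNat.symm p) = lamH p := by
  simp only [muH, lamH, ← Equiv.natAbs_intEquivNat_symm, Nat.cast_natAbs, Int.cast_abs, mul_pow,
    sq_abs]

theorem muH_nonneg (j : ℤ) : 0 ≤ muH j := sq_nonneg _

theorem lamH_monotone : Monotone lamH := by
  intro p q hpq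
  unfold lamH
  gcongr

theorem absOp_of_nonneg {ρ : L2 →L[ℂ] L2} (hρ : 0 ≤ ρ) : absOp ρ = ρ := by
  rw [absOp, ((ContinuousLinearMap.nonneg_iff_isPositive ρ).1 hρ).isSelfAdjoint.star_eq,
    CFC.sqrt_mul_self ρ hρ]

theorem kinE_nonneg {ρ : L2 →L[ℂ] L2} (hρ : 0 ≤ ρ) : 0 ≤ kinE ρ :=
  tsum_nonneg fun j => mul_nonneg (muH_nonneg j)
    (((ContinuousLinearMap.nonneg_iff_isPositive ρ).1 hρ).re_inner_nonneg_right _)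

theorem ofReal_kinE_eq_tsum {ρ : L2 →L[ℂ] L2} (hρ : 0 ≤ ρ)
    (hkin : Summable fun j => muH j * (⟪fE j, ρ (fE j)⟫_ℂ).re) (b : HilbertBasis ℕ ℂ L2)
    {lam : ℕ → ℝ} (hlam : ∀ p, 0 ≤ lam p) (hb : ∀ p, ρ (b p) = (lam p : ℂ) • b p) :
    ENNReal.ofReal (kinE ρ) = ∑' p, ENNReal.ofReal (lam p) *
      ∑' j, ENNReal.ofReal (muH j) * ENNReal.ofReal (‖⟪b p, fE j⟫_ℂ‖ ^ 2) := by
  have hρpos := (ContinuousLinearMap.nonneg_iff_isPositive ρ).1 hρ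
  rw [kinE, ENNReal.ofReal_tsum_of_nonneg (f := fun j => muH j * (⟪fE j, ρ (fE j)⟫_ℂ).re)
    (fun j => mul_nonneg (muH_nonneg j) (hρpos.re_inner_nonneg_right _)) hkin]
  exact b.tsum_ofReal_mul_re_inner_apply_self hρpos.isSelfAdjoint hlam hb muH_nonneg fE

/-- For `ρ ∈ ℰ₊` with nonincreasing eigenvalues `(ρ_p)`,
`Tr(√H ρ √H) ≥ Σ_p ρ_p λ_p[H]`. -/
theorem kinetic_energy_eigenvalue_lower_bound
    (ρ : L2 →L[ℂ] L2) (hρ : MemEplus ρ)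
    (φ : ℕ → L2) (lam : ℕ → ℝ) (hdec : IsEigenbasis ρ φ lam) :
    Summable (fun p : ℕ => lam p * lamH p) ∧ ∑' p : ℕ, lam p * lamH p ≤ kinE ρ := by
  obtain ⟨⟨-, -, hkin⟩, hpos⟩ := hρ
  obtain ⟨horth, hspan, hanti, hnn, heig⟩ := hdec
  set b : HilbertBasis ℕ ℂ L2 := HilbertBasis.mk horth hspan.ge
  have hb : ⇑b = φ := HilbertBasis.coe_mk _ _
  have hkinE := ofReal_kinE_eq_tsum hpos (absOp_of_nonneg hpos ▸ hkin) b hnn (by rwa [hb])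
  have hKyFan := ENNReal.tsum_mul_le_tsum_mul_tsum_mul_of_substochastic
    (fun p q h => ENNReal.ofReal_le_ofReal (hanti h)) Equiv.intEquivNat.symm
    (M := fun j => ENNReal.ofReal (muH j))
    (by simpa only [Function.comp_def, muH_intEquivNat_symm] using
      ENNReal.ofReal_mono.comp lamH_monotone)
    (fun j => (b.tsum_ofReal_norm_inner_sq_left fourierBasis j).le)
    (b.tsum_ofReal_norm_inner_sq_right fourierBasis)
  refine summable_and_tsum_le_of_tsum_ofReal_le (fun p => mul_nonneg (hnn p) (sq_nonneg _))
    (kinE_nonneg hpos) ?_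
  calc ∑' p, ENNReal.ofReal (lam p * lamH p)
      = ∑' p, ENNReal.ofReal (lam p) * ENNReal.ofReal (muH (Equiv.intEquivNat.symm p)) :=
        tsum_congr fun p => by rw [ENNReal.ofReal_mul (hnn p), muH_intEquivNat_symm]
    _ ≤ _ := hKyFan
    _ = ENNReal.ofReal (kinE ρ) := hkinE.symm

end QSM
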